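/- arXiv:2503.07932 — 2 statements merged into one kernel-verified Lean document; each statement's English description precedes it below -/
import Mathlib

section
/- For any finite alphabet Σ, base class F, and T ≥ 1, the Natarajan dimension of the end-to-end class satisfies Ndim(F^{e2e(T)}) ≤ 9 · T · Ndim(F) · log₂(2·Ndim(F)·|Σ| / (e·ln 2)). -/
def applyAppend {σ : Type*} (f : List σ → σ) (x : List σ) : List σ := x ++ [f x]

def cot {σ : Type*} (f : List σ → σ) (T : ℕ) (x : List σ) : List σ :=
  (applyAppend f)^[T] x

def e2e {σ : Type*} [Inhabited σ] (f : List σ → σ) (T : ℕ) (x : List σ) : σ :=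
  (cot f T x).getLastD default

def e2eClass {σ : Type*} [Inhabited σ] (F : Set (List σ → σ)) (T : ℕ) :
    Set (List σ → σ) := (fun f => e2e f T) '' F

/-- Natarajan shattering of a set of `d` points by a class `H ⊆ Y^X`. -/
def NShatters {X Y : Type*} (H : Set (X → Y)) (d : ℕ) : Prop :=
  ∃ x : Fin d → X, ∃ g₀ g₁ : Fin d → Y,
    (∀ i, g₀ i ≠ g₁ i) ∧
    ∀ U : Fin d → Bool, ∃ h ∈ H, ∀ i, h (x i) = if U i then g₀ i else g₁ i

/-!
If the end-to-end class shatters `x₁, …, x_d`, the `2 ^ d` base functions realising the patterns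
already differ on the inputs queried by rollouts of at most `T` steps from the `xᵢ`; these are
indexed by at most `n = d T |Σ| ^ T` triples. The Natarajan analogue of the Sauer–Shelah lemma,
proved by deleting one point of the domain, bounds the number of restrictions of `F` to `n` points
by `((n + 1) |Σ| ^ 2) ^ N`. Taking logarithms in `2 ^ d ≤ ((d T |Σ| ^ T + 1) |Σ| ^ 2) ^ N` and
bounding `log d ≤ d log 2 / (2 N) + log (2 N / (e log 2))` solves for `d`.
-/

open Finset

section Shattering

variable {α β X Y : Type*}

theorem NShatters.of_image_comp {A : Set (α → Y)} (φ : β → α) {k : ℕ}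
    (h : NShatters ((· ∘ φ) '' A) k) : NShatters A k := by
  obtain ⟨x, g₀, g₁, hne, hU⟩ := h
  refine ⟨φ ∘ x, g₀, g₁, hne, fun U => ?_⟩
  obtain ⟨_, ⟨f, hf, rfl⟩, hpat⟩ := hU U
  exact ⟨f, hf, hpat⟩

theorem NShatters.succ_of_forall_extends {A : Set (α → Y)} (φ : β → α) (a : α) {y₁ y₂ : Y}
    (hy : y₁ ≠ y₂) {B : Set (β → Y)}
    (hB : ∀ g ∈ B, (∃ f ∈ A, f ∘ φ = g ∧ f a = y₁) ∧ ∃ f ∈ A, f ∘ φ = g ∧ f a = y₂)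
    {k : ℕ} (h : NShatters B k) : NShatters A (k + 1) := by
  obtain ⟨x, g₀, g₁, hne, hU⟩ := h
  refine ⟨Fin.snoc (φ ∘ x) a, Fin.snoc g₀ y₁, Fin.snoc g₁ y₂,
    Fin.lastCases (by simpa) (by simpa using hne), fun U => ?_⟩
  obtain ⟨g, hg, hpat⟩ := hU (U ∘ Fin.castSucc)
  obtain ⟨f, hf, rfl, hfa⟩ : ∃ f ∈ A, f ∘ φ = g ∧ f a = if U (Fin.last k) then y₁ else y₂ := by
    cases U (Fin.last k)
    exacts [(hB g hg).2, (hB g hg).1]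
  exact ⟨f, hf, Fin.lastCases (by simpa using hfa) (fun j => by simpa using hpat j)⟩

theorem nshatters_zero_of_nonempty {B : Set (α → Y)} (hB : B.Nonempty) : NShatters B 0 := by
  obtain ⟨g, hg⟩ := hB
  exact ⟨Fin.elim0, Fin.elim0, Fin.elim0, Fin.rec0, fun _ => ⟨g, hg, Fin.rec0⟩⟩

theorem NShatters.one_lt_card [Fintype Y] {H : Set (X → Y)} {d : ℕ} (h : NShatters H d)
    (hd : 0 < d) : 1 < Fintype.card Y := by
  obtain ⟨-, g₀, g₁, hne, -⟩ := h
  exact Fintype.one_lt_card_iff.2 ⟨_, _, hne ⟨0, hd⟩⟩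

theorem NShatters.exists_two_pow_le_ncard [Finite Y] {H : Set (X → Y)} {d : ℕ}
    (h : NShatters H d) : ∃ x : Fin d → X, 2 ^ d ≤ ((· ∘ x) '' H).ncard := by
  obtain ⟨x, g₀, g₁, hne, hU⟩ := h
  refine ⟨x, ?_⟩
  set pattern : (Fin d → Bool) → Fin d → Y := fun U i => if U i then g₀ i else g₁ i
  have hinj : pattern.Injective := fun U U' hUU' => funext fun i => by
    have := congrFun hUU' i
    simp only [pattern] at this
    revert this
    cases U i <;> cases U' i <;> simp [hne i, (hne i).symm]
  calc 2 ^ d = (Set.range pattern).ncard := by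
        rw [← Set.image_univ, Set.ncard_image_of_injective _ hinj]; simp
    _ ≤ ((· ∘ x) '' H).ncard := Set.ncard_le_ncard (by
        rintro _ ⟨U, rfl⟩
        obtain ⟨h, hh, hpat⟩ := hU U
        exact ⟨h, hh, funext hpat⟩)

end Shattering

theorem Set.ncard_image_le_ncard_image_of_factorsThrough {α β γ : Type*} {s : Set α}
    {g : α → β} {h : α → γ} (hs : (h '' s).Finite) (hgh : g.FactorsThrough h) :
    (g '' s).ncard ≤ (h '' s).ncard := by
  rcases s.eq_empty_or_nonempty with rfl | ⟨a, -⟩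
  · simp
  · rw [← hgh.extend_comp (fun _ => g a), Set.image_comp]
    exact Set.ncard_image_le hs

theorem card_le_one_add_card_offDiag {Y : Type*} [DecidableEq Y] (V : Finset Y) :
    #V ≤ 1 + #V.offDiag := by
  rw [offDiag_card]
  cases #V with
  | zero => simp
  | succ m => rw [Nat.succ_mul, Nat.add_sub_cancel]; nlinarith

/-- A fibre of `r` with `m` elements takes `m` distinct values under `e`, and `m ≤ 1 + m (m - 1)`
counts it once in `A.image r` and once for each ordered pair of distinct values it takes. -/
theorem card_le_card_image_add_sum_offDiag {ι κ Y : Type*} [DecidableEq κ] [Fintype Y]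
    [DecidableEq Y] (A : Finset ι) (r : ι → κ) (e : ι → Y)
    (hinj : Set.InjOn (fun f => (r f, e f)) A) :
    #A ≤ #(A.image r) + ∑ p ∈ (univ : Finset Y).offDiag,
      #({f ∈ A | e f = p.1}.image r ∩ {f ∈ A | e f = p.2}.image r) := by
  set B : Y × Y → Finset κ := fun p => {f ∈ A | e f = p.1}.image r ∩ {f ∈ A | e f = p.2}.image r
  set V : κ → Finset Y := fun g => {f ∈ A | r f = g}.image e
  have hfiber : ∀ g, #{f ∈ A | r f = g} = #(V g) := fun g =>
    (card_image_of_injOn fun f hf f' hf' h => hinj (mem_filter.1 hf).1 (mem_filter.1 hf').1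
      (Prod.ext ((mem_filter.1 hf).2.trans (mem_filter.1 hf').2.symm) h)).symm
  have hpairs : ∀ g, (V g).offDiag = {p ∈ (univ : Finset Y).offDiag | g ∈ B p} := by
    intro g
    ext p
    simp [V, B, and_comm, and_left_comm]
  calc #A = ∑ g ∈ A.image r, #(V g) := by
        rw [card_eq_sum_card_image r A]; exact sum_congr rfl fun g _ => hfiber g
    _ ≤ ∑ g ∈ A.image r, (1 + #(V g).offDiag) :=
        sum_le_sum fun g _ => card_le_one_add_card_offDiag _
    _ = #(A.image r) + ∑ p ∈ (univ : Finset Y).offDiag, #{g ∈ A.image r | g ∈ B p} := by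
        simp only [sum_add_distrib, sum_const, smul_eq_mul, mul_one, hpairs]
        exact congrArg _ (sum_card_bipartiteAbove_eq_sum_card_bipartiteBelow _)
    _ = _ := by
        refine congrArg _ (sum_congr rfl fun p _ => ?_)
        rw [filter_mem_eq_inter, inter_eq_right.mpr
          (inter_subset_left.trans (image_subset_image (filter_subset _ _)))]

theorem card_le_of_nshatters_le {α Y : Type*} [Fintype α] [Fintype Y] [Nonempty Y] {N : ℕ}
    (A : Finset (α → Y)) (hA : ∀ k, NShatters (A : Set (α → Y)) k → k ≤ N) :
    #A ≤ ((Fintype.card α + 1) * Fintype.card Y ^ 2) ^ N := by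
  classical
  induction hn : Fintype.card α generalizing α N with
  | zero =>
    have := Fintype.card_eq_zero_iff.mp hn
    exact (card_le_one_of_subsingleton A).trans (Nat.one_le_pow _ _ (by positivity))
  | succ n ih =>
    obtain ⟨a⟩ : Nonempty α := Fintype.card_pos_iff.mp (by omega)
    have hcard : Fintype.card {x // x ≠ a} = n := by
      rw [Fintype.card_subtype_compl, hn, Fintype.card_unique]; rfl
    set r : (α → Y) → ({x // x ≠ a} → Y) := (· ∘ Subtype.val)
    have hinj : Set.InjOn (fun f => (r f, f a)) A := fun f _ f' _ h => funext fun x => by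
      by_cases hx : x = a
      · subst hx; exact (Prod.ext_iff.1 h).2
      · exact congrFun (Prod.ext_iff.1 h).1 ⟨x, hx⟩
    set B : Y × Y → Finset ({x // x ≠ a} → Y) :=
      fun p => {f ∈ A | f a = p.1}.image r ∩ {f ∈ A | f a = p.2}.image r
    have hB : ∀ p ∈ (univ : Finset Y).offDiag, ∀ k,
        NShatters (B p : Set ({x // x ≠ a} → Y)) k → k + 1 ≤ N := by
      intro p hp k hk
      refine hA _ (hk.succ_of_forall_extends Subtype.val a (mem_offDiag.1 hp).2.2 fun g hg => ?_)
      simp only [B, coe_inter, coe_image, coe_filter, Set.mem_inter_iff, Set.mem_image,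
        Set.mem_ofPred_eq] at hg
      obtain ⟨⟨f₁, ⟨hf₁, hf₁a⟩, rfl⟩, ⟨f₂, ⟨hf₂, hf₂a⟩, hf₂g⟩⟩ := hg
      exact ⟨⟨f₁, hf₁, rfl, hf₁a⟩, ⟨f₂, hf₂, hf₂g, hf₂a⟩⟩
    have hR : #(A.image r) ≤ ((n + 1) * Fintype.card Y ^ 2) ^ N :=
      ih (A.image r) (fun k hk => hA k (.of_image_comp Subtype.val (by simpa using hk))) hcard
    refine (card_le_card_image_add_sum_offDiag A r (· a) hinj).trans ?_
    cases N with
    | zero =>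
      have hBempty : ∀ p ∈ (univ : Finset Y).offDiag, B p = ∅ := fun p hp =>
        not_nonempty_iff_eq_empty.1 fun hne => by
          simpa using hB p hp 0 (nshatters_zero_of_nonempty (by simpa using hne))
      calc #(A.image r) + ∑ p ∈ (univ : Finset Y).offDiag, #(B p) = #(A.image r) := by
            rw [sum_eq_zero fun p hp => card_eq_zero.2 (hBempty p hp), add_zero]
        _ ≤ _ := hR
    | succ M =>
      set c := (n + 1) * Fintype.card Y ^ 2
      have hBM : ∀ p ∈ (univ : Finset Y).offDiag, #(B p) ≤ c ^ M := fun p hp =>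
        ih (B p) (fun k hk => Nat.le_of_succ_le_succ (hB p hp k hk)) hcard
      calc #(A.image r) + ∑ p ∈ (univ : Finset Y).offDiag, #(B p)
          ≤ c ^ (M + 1) + Fintype.card Y ^ 2 * c ^ M := by
            refine add_le_add hR ((sum_le_sum hBM).trans ?_)
            rw [sum_const, smul_eq_mul, offDiag_card, card_univ, sq]
            exact Nat.mul_le_mul_right _ (Nat.sub_le _ _)
        _ = c ^ M * (c + Fintype.card Y ^ 2) := by ring
        _ ≤ (c + Fintype.card Y ^ 2) ^ M * (c + Fintype.card Y ^ 2) := by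
            gcongr; exact Nat.le_add_right _ _
        _ = ((n + 1 + 1) * Fintype.card Y ^ 2) ^ (M + 1) := by ring

section EndToEnd

variable {σ : Type*}

theorem cot_succ (f : List σ → σ) (t : ℕ) (x : List σ) :
    cot f (t + 1) x = cot f t x ++ [f (cot f t x)] :=
  Function.iterate_succ_apply' _ _ _

theorem exists_cot_eq_append (f : List σ → σ) (t : ℕ) (x : List σ) :
    ∃ l : List σ, l.length = t ∧ cot f t x = x ++ l := by
  induction t with
  | zero => exact ⟨[], rfl, by simp [cot]⟩
  | succ t ih =>
    obtain ⟨l, hl, hcot⟩ := ih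
    exact ⟨l ++ [f (cot f t x)], by simp [hl], by rw [cot_succ, hcot, List.append_assoc]⟩

theorem cot_eq_of_forall_length_lt {f f' : List σ → σ} {x : List σ} {T : ℕ}
    (h : ∀ l : List σ, l.length < T → f (x ++ l) = f' (x ++ l)) : cot f T x = cot f' T x := by
  suffices ∀ t ≤ T, cot f t x = cot f' t x from this T le_rfl
  intro t ht
  induction t with
  | zero => rfl
  | succ t ih =>
    obtain ⟨l, hl, hcot⟩ := exists_cot_eq_append f t x
    rw [cot_succ, cot_succ, ← ih (by omega), hcot, h l (by omega)]

theorem exists_take_ofFn_eq [Inhabited σ] {T : ℕ} (l : List σ) (hl : l.length ≤ T) :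
    ∃ w : Fin T → σ, (List.ofFn w).take l.length = l :=
  ⟨fun j => l.getD j default, List.ext_getElem (by simpa using hl) fun k _ hk => by simp [hk]⟩

/-- `(i, t, w)` is the query made at step `t` of a rollout from `x i` whose first `t` generated
tokens are those of `w`. -/
def rolloutQuery {d : ℕ} (x : Fin d → List σ) (T : ℕ) (p : Fin d × Fin T × (Fin T → σ)) :
    List σ :=
  x p.1 ++ (List.ofFn p.2.2).take p.2.1

theorem e2e_eq_of_comp_rolloutQuery_eq [Inhabited σ] {d T : ℕ} {x : Fin d → List σ}
    {f f' : List σ → σ} (h : f ∘ rolloutQuery x T = f' ∘ rolloutQuery x T) (i : Fin d) :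
    e2e f T (x i) = e2e f' T (x i) := by
  refine congrArg (List.getLastD · default) (cot_eq_of_forall_length_lt fun l hl => ?_)
  obtain ⟨w, hw⟩ := exists_take_ofFn_eq (T := T) l hl.le
  simpa [rolloutQuery, hw] using congrFun h (i, ⟨l.length, hl⟩, w)

theorem two_pow_le_of_nshatters_e2eClass [Fintype σ] [Inhabited σ] {F : Set (List σ → σ)}
    {N T d : ℕ} (hF : ∀ k, NShatters F k → k ≤ N) (h : NShatters (e2eClass F T) d) :
    2 ^ d ≤ ((d * (T * Fintype.card σ ^ T) + 1) * Fintype.card σ ^ 2) ^ N := by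
  classical
  obtain ⟨x, hx⟩ := h.exists_two_pow_le_ncard
  set A := (· ∘ rolloutQuery x T) '' F
  have hA : ∀ k, NShatters (A.toFinset : Set (Fin d × Fin T × (Fin T → σ) → σ)) k → k ≤ N :=
    fun k hk => hF k (.of_image_comp _ (by simpa using hk))
  calc 2 ^ d ≤ ((· ∘ x) '' e2eClass F T).ncard := hx
    _ ≤ A.ncard := by
        rw [e2eClass, Set.image_image]
        exact Set.ncard_image_le_ncard_image_of_factorsThrough (Set.toFinite _)
          fun f f' hff' => funext (e2e_eq_of_comp_rolloutQuery_eq hff')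
    _ = #A.toFinset := Set.ncard_eq_toFinset_card' A
    _ ≤ _ := by simpa using card_le_of_nshatters_le A.toFinset hA

end EndToEnd

section Arithmetic

open Real

theorem exp_one_mul_log_two_lt_two : exp 1 * log 2 < 2 := by
  have := exp_one_lt_d9
  have := log_two_lt_d9
  nlinarith [exp_pos 1]

theorem one_le_two_mul_div_exp_one_mul_log_two {N : ℝ} (hN : 1 ≤ N) :
    1 ≤ 2 * N / (exp 1 * log 2) := by
  rw [one_le_div (by positivity)]
  linarith [exp_one_mul_log_two_lt_two]

theorem log_le_div_add_log_div_exp_one {x c : ℝ} (hx : 0 < x) (hc : 0 < c) :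
    log x ≤ x / c + log (c / exp 1) := by
  have := log_le_sub_one_of_pos (div_pos hx hc)
  rw [log_div hx.ne' hc.ne'] at this
  rw [log_div hc.ne' (exp_pos 1).ne', log_exp]
  linarith

theorem nine_mul_logb_nonneg (T N : ℕ) {s : ℝ} (hs : 1 ≤ s) :
    0 ≤ 9 * T * N * logb 2 (2 * N * s / (exp 1 * log 2)) := by
  rcases N.eq_zero_or_pos with rfl | hN
  · simp
  refine mul_nonneg (by positivity) (logb_nonneg one_lt_two ?_)
  rw [mul_div_right_comm]
  exact one_le_mul_of_one_le_of_one_le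
    (one_le_two_mul_div_exp_one_mul_log_two (by exact_mod_cast hN)) hs

theorem mul_log_two_le_of_two_pow_le {s N T d : ℕ} (hs : 1 ≤ s) (hT : 1 ≤ T) (hd : 1 ≤ d)
    (h : 2 ^ d ≤ ((d * (T * s ^ T) + 1) * s ^ 2) ^ N) :
    d * log 2 ≤ N * (log 2 + log d + log T + (T + 2) * log s) := by
  have hs' : (1 : ℝ) ≤ s := by exact_mod_cast hs
  have hT' : (1 : ℝ) ≤ T := by exact_mod_cast hT
  have hd' : (1 : ℝ) ≤ d := by exact_mod_cast hd
  have hmul : (1 : ℝ) ≤ d * (T * s ^ T) :=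
    one_le_mul_of_one_le_of_one_le hd' (one_le_mul_of_one_le_of_one_le hT' (one_le_pow₀ hs'))
  calc d * log 2 = log ((2 : ℝ) ^ d) := by rw [log_pow]
    _ ≤ log ((((d * (T * s ^ T) + 1) * s ^ 2) ^ N : ℕ) : ℝ) :=
        log_le_log (by positivity) (by exact_mod_cast h)
    _ = N * log ((d * (T * s ^ T) + 1) * s ^ 2) := by push_cast; rw [log_pow]
    _ ≤ N * log (2 * d * T * s ^ T * s ^ 2) := by gcongr; nlinarith
    _ = N * (log 2 + log d + log T + (T + 2) * log s) := by
        rw [log_mul (by positivity) (by positivity), log_mul (by positivity) (by positivity),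
          log_mul (by positivity) (by positivity), log_mul (by positivity) (by positivity),
          log_pow, log_pow]
        push_cast; ring

theorem le_nine_mul_logb_of_mul_log_two_le {s N T d : ℝ} (hs : 2 ≤ s) (hN : 1 ≤ N)
    (hT : 1 ≤ T) (hd : 0 < d) (h : d * log 2 ≤ N * (log 2 + log d + log T + (T + 2) * log s)) :
    d ≤ 9 * T * N * logb 2 (2 * N * s / (exp 1 * log 2)) := by
  set L := log (2 * N / (exp 1 * log 2))
  have hL : 0 ≤ L := log_nonneg (one_le_two_mul_div_exp_one_mul_log_two hN)
  have hlogd : N * log d ≤ d * log 2 / 2 + N * L := by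
    -- `c = 2 N / log 2` makes the linear term half of the left-hand side `d log 2`.
    have := log_le_div_add_log_div_exp_one hd (c := 2 * N / log 2) (by positivity)
    rw [div_div_eq_mul_div, div_div, mul_comm (log 2)] at this
    have hN0 : 0 < N := by linarith
    calc N * log d ≤ N * (d * log 2 / (2 * N) + L) := by gcongr
      _ = _ := by field_simp
  have hlogs : log 2 ≤ log s := log_le_log two_pos hs
  have hlogT : log T ≤ T - 1 := log_le_sub_one_of_pos (by linarith)
  have hl : log (2 * N * s / (exp 1 * log 2)) = L + log s := by
    rw [mul_div_right_comm, log_mul (by positivity) (by positivity)]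
  have hkey : 2 * (log 2 + log T + (T + 2) * log s + L) ≤ 9 * T * (L + log s) := by
    have := log_two_gt_d9
    nlinarith [mul_nonneg (sub_nonneg.2 hT) (sub_nonneg.2 hlogs), mul_nonneg (sub_nonneg.2 hT) hL]
  rw [logb, hl, ← mul_div_assoc, le_div_iff₀ (by positivity)]
  nlinarith [mul_le_mul_of_nonneg_left hkey (by linarith : (0 : ℝ) ≤ N)]

end Arithmetic

theorem ndim_e2eClass_le_general {σ : Type*} [Fintype σ] [Inhabited σ]
    (F : Set (List σ → σ)) (N T : ℕ) (hT : 1 ≤ T)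
    (hNmax : ∀ d, NShatters F d → d ≤ N) :
    ∀ d, NShatters (e2eClass F T) d →
      (d : ℝ) ≤ 9 * T * N *
        Real.logb 2 (2 * N * (Fintype.card σ) / (Real.exp 1 * Real.log 2)) := by
  intro d hd
  rcases d.eq_zero_or_pos with rfl | hd0
  · simpa using nine_mul_logb_nonneg T N (by exact_mod_cast Fintype.card_pos (α := σ))
  have hcount := two_pow_le_of_nshatters_e2eClass hNmax hd
  have hN : 1 ≤ N := Nat.pos_of_ne_zero fun hN => by
    rw [hN, pow_zero] at hcount
    exact (Nat.one_lt_two_pow hd0.ne').not_ge hcount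
  exact le_nine_mul_logb_of_mul_log_two_le (by exact_mod_cast hd.one_lt_card hd0)
    (by exact_mod_cast hN) (by exact_mod_cast hT) (by exact_mod_cast hd0)
    (mul_log_two_le_of_two_pow_le Fintype.card_pos hT hd0 hcount)

/-- for any finite alphabet `σ`, base class `F` with finite
Natarajan dimension `N`, and `T ≥ 1`, the Natarajan dimension of the
end-to-end class satisfies `Ndim(F^{e2e(T)}) ≤ 9·T·N·log₂(2·N·|σ|/(e·ln 2))`. -/
theorem ndim_e2eClass_le {σ : Type*} [Fintype σ] [Inhabited σ]
    (F : Set (List σ → σ)) (N T : ℕ) (hT : 1 ≤ T)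
    (hN : NShatters F N) (hNmax : ∀ d, NShatters F d → d ≤ N) :
    ∀ d, NShatters (e2eClass F T) d →
      (d : ℝ) ≤ 9 * T * N *
        Real.logb 2 (2 * N * (Fintype.card σ) / (Real.exp 1 * Real.log 2)) :=
  ndim_e2eClass_le_general F N T hT hNmax
end

section
/- For every Turing machine transition rule τ on state set [S] and tape alphabet {0,1,⊔}, and every input ω ∈ {0,1}*, the autoregressive generator f_τ (which at each step decodes the computation history encoded in its input string, computes the current head position as the running sum of past moves, retrieves the most recently written symbol at that position—or ⊔ if none—and applies τ) satisfies: iterating f_τ for T steps starting from the preprocessed prompt Pre(ω) produces at step t exactly the token (s_t, a_t, b_t) recording the machine's state, written symbol, and head move at step t of the run of the machine ⟨S,T,τ⟩ on ω. In particular, the symbol component of the final token equals the machine's output g_{⟨S,T,τ⟩}(ω). -/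
/-- Tokens: (state, tape symbol, head move); `none` is the blank symbol `⊔`. -/
abbrev Tok (S : ℕ) := Fin S × Option Bool × ℤ

/-- A machine configuration: (tape, head position, internal state). -/
abbrev Config (S : ℕ) := (ℤ → Option Bool) × ℤ × Fin S

/-- Initial tape: input `ω` on cells `1..|ω|`, blank elsewhere. -/
def initTape (ω : List Bool) : ℤ → Option Bool := fun p =>
  if 1 ≤ p ∧ p ≤ ω.length then some (ω.getD (p - 1).toNat false) else none

/-- One Turing machine step: read, transition, write, move. -/
def tmStep {S : ℕ} (τ : Fin S × Option Bool → Fin S × Bool × ℤ)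
    (c : Config S) : Config S :=
  let r := c.1 c.2.1
  let t := τ (c.2.2, r)
  (Function.update c.1 c.2.1 (some t.2.1), c.2.1 + t.2.2, t.1)

/-- Configuration after `t` steps on input `ω`: head starts at `|ω|+1`, state `1`
(encoded as `0 : Fin S`). -/
def tmRun {S : ℕ} [NeZero S] (τ : Fin S × Option Bool → Fin S × Bool × ℤ)
    (ω : List Bool) (t : ℕ) : Config S :=
  (tmStep τ)^[t] (initTape ω, ((ω.length : ℤ) + 1, (0 : Fin S)))

/-- The triple `(s_{t+1}, a_{t+1}, b_{t+1})` produced at step `t+1` of the run. -/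
def tmEmit {S : ℕ} [NeZero S] (τ : Fin S × Option Bool → Fin S × Bool × ℤ)
    (ω : List Bool) (t : ℕ) : Fin S × Bool × ℤ :=
  let c := tmRun τ ω t
  τ (c.2.2, c.1 c.2.1)

def toTok {S : ℕ} (p : Fin S × Bool × ℤ) : Tok S := (p.1, some p.2.1, p.2.2)

/-- `pos i`: head position at which the symbol of token `i` was written
(running sum of the moves of the earlier tokens). -/
def pos {S : ℕ} (z : List (Tok S)) (i : ℕ) : ℤ :=
  ((z.take i).map (fun t => t.2.2)).sum

/-- Final head position: sum of all moves. -/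
def npos {S : ℕ} (z : List (Tok S)) : ℤ := (z.map (fun t => t.2.2)).sum

/-- Symbol read at the current head position: the most recently written symbol
there, or blank if that cell was never written. -/
def readSym {S : ℕ} [NeZero S] (z : List (Tok S)) : Option Bool :=
  let s := (Finset.range z.length).filter (fun i => pos z i = npos z)
  if h : s.Nonempty then (z.getD (s.max' h) default).2.1 else none

/-- The autoregressive generator `f_τ`: decode the computation history, read the
tape, and apply the transition rule `τ`. -/
def fTau {S : ℕ} [NeZero S] (τ : Fin S × Option Bool → Fin S × Bool × ℤ)
    (z : List (Tok S)) : Tok S :=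
  toTok (τ ((z.getLastD default).1, readSym z))

/-- Preprocessing: a beginning-of-sequence token `(1, ⊔, +1)` followed by tokens
`(1, ω[i], +1)`. -/
def pre {S : ℕ} [NeZero S] (ω : List Bool) : List (Tok S) :=
  ((0 : Fin S), (none : Option Bool), (1 : ℤ)) ::
    ω.map (fun b => ((0 : Fin S), some b, (1 : ℤ)))

/-!
The token history is a complete record of the run. Reading it back as a configuration
(tape = the last symbol written at each cell, head = the sum of the moves, state = the state
of the last token) turns appending a token into one machine step, so `configOf` semiconjugates
`applyAppend (fTau τ)` to `tmStep τ`. The prompt `pre ω` decodes to the initial configuration,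
because its leading blank token is written at cell `0` and the input tokens at cells `1..|ω|`.
-/

section TokenHistory

variable {S : ℕ}

lemma pos_append_of_le_length (z w : List (Tok S)) {i : ℕ} (h : i ≤ z.length) :
    pos (z ++ w) i = pos z i := by
  rw [pos, List.take_append_of_le_length h, pos]

lemma pos_length (z : List (Tok S)) : pos z z.length = npos z := by
  rw [pos, List.take_length, npos]

lemma npos_append_singleton (z : List (Tok S)) (a : Tok S) :
    npos (z ++ [a]) = npos z + a.2.2 := by
  simp [npos]

def writesAt (z : List (Tok S)) (p : ℤ) : Finset ℕ :=
  (Finset.range z.length).filter (fun i => pos z i = p)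

lemma writesAt_append_singleton (z : List (Tok S)) (a : Tok S) (p : ℤ) :
    writesAt (z ++ [a]) p =
      if npos z = p then insert z.length (writesAt z p) else writesAt z p := by
  have hold : (Finset.range z.length).filter (fun i => pos (z ++ [a]) i = p) = writesAt z p :=
    Finset.filter_congr fun i hi => by
      rw [pos_append_of_le_length z [a] (Finset.mem_range.mp hi).le]
  simp only [writesAt, List.length_append, List.length_singleton, Finset.range_add_one,
    Finset.filter_insert, pos_append_of_le_length z [a] le_rfl, pos_length, hold]

lemma lt_length_of_mem_writesAt {z : List (Tok S)} {p : ℤ} {i : ℕ} (h : i ∈ writesAt z p) :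
    i < z.length :=
  Finset.mem_range.mp (Finset.mem_filter.mp h).1

variable [NeZero S]

def tapeOf (z : List (Tok S)) (p : ℤ) : Option Bool :=
  if h : (writesAt z p).Nonempty then (z.getD ((writesAt z p).max' h) default).2.1 else none

lemma readSym_eq_tapeOf (z : List (Tok S)) : readSym z = tapeOf z (npos z) := rfl

lemma tapeOf_nil : tapeOf ([] : List (Tok S)) = fun _ => none := by
  funext p
  simp [tapeOf, writesAt]

lemma tapeOf_append_singleton (z : List (Tok S)) (a : Tok S) :
    tapeOf (z ++ [a]) = Function.update (tapeOf z) (npos z) a.2.1 := by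
  funext p
  rw [Function.update_apply, tapeOf, writesAt_append_singleton]
  by_cases hp : npos z = p
  · subst hp
    have hmax : (insert z.length (writesAt z (npos z))).max' (Finset.insert_nonempty _ _)
        = z.length :=
      le_antisymm
        (Finset.max'_le _ _ _ fun i hi => (Finset.mem_insert.mp hi).elim le_of_eq
          fun hi => (lt_length_of_mem_writesAt hi).le)
        (Finset.le_max' _ _ (Finset.mem_insert_self _ _))
    simp [hmax]
  · rw [if_neg hp, if_neg (Ne.symm hp), tapeOf]
    split_ifs with h
    · rw [List.getD_append _ _ _ _ (lt_length_of_mem_writesAt (Finset.max'_mem _ h))]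
    · rfl

def configOf (z : List (Tok S)) : Config S :=
  (tapeOf z, npos z, (z.getLastD default).1)

lemma configOf_append_singleton (z : List (Tok S)) (a : Tok S) :
    configOf (z ++ [a]) =
      (Function.update (tapeOf z) (npos z) a.2.1, npos z + a.2.2, a.1) := by
  rw [configOf, tapeOf_append_singleton, npos_append_singleton, List.getLastD_concat]

end TokenHistory

section Prompt

variable {S : ℕ} [NeZero S]

lemma initTape_nil : initTape [] = fun _ => none := by
  funext p
  simp only [initTape, List.length_nil, Nat.cast_zero]
  exact if_neg (by omega)

lemma initTape_append_singleton (ω : List Bool) (b : Bool) :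
    initTape (ω ++ [b]) = Function.update (initTape ω) ((ω.length : ℤ) + 1) (some b) := by
  funext p
  simp only [Function.update_apply, initTape, List.length_append, List.length_singleton,
    Nat.cast_add, Nat.cast_one]
  by_cases hp : p = (ω.length : ℤ) + 1
  · subst hp
    simp
  · rw [if_neg hp]
    by_cases hin : 1 ≤ p ∧ p ≤ ω.length
    · have hlt : (p - 1).toNat < ω.length := by omega
      rw [if_pos hin, if_pos (by omega), List.getD_append _ _ _ _ hlt]
    · rw [if_neg hin, if_neg (by omega)]

lemma pre_append_singleton (ω : List Bool) (b : Bool) :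
    pre (S := S) (ω ++ [b]) = pre ω ++ [(0, some b, 1)] := by
  simp [pre]

lemma configOf_pre (ω : List Bool) :
    configOf (pre (S := S) ω) = (initTape ω, (ω.length : ℤ) + 1, 0) := by
  induction ω using List.reverseRecOn with
  | nil =>
    rw [show pre (S := S) [] = [] ++ [(0, none, 1)] from rfl, configOf_append_singleton]
    simp [tapeOf_nil, initTape_nil, npos]
  | append_singleton ω b ih =>
    simp only [configOf, Prod.mk.injEq] at ih
    obtain ⟨htape, hpos, -⟩ := ih
    rw [pre_append_singleton, configOf_append_singleton, initTape_append_singleton, htape, hpos]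
    simp

end Prompt

section Simulation

variable {S : ℕ} [NeZero S] (τ : Fin S × Option Bool → Fin S × Bool × ℤ)

lemma fTau_eq (z : List (Tok S)) :
    fTau τ z = toTok (τ ((configOf z).2.2, (configOf z).1 (configOf z).2.1)) := by
  rw [fTau, readSym_eq_tapeOf]
  rfl

lemma configOf_applyAppend_fTau (z : List (Tok S)) :
    configOf (applyAppend (fTau τ) z) = tmStep τ (configOf z) := by
  rw [applyAppend, configOf_append_singleton]
  rfl

lemma configOf_iterate_pre (ω : List Bool) (t : ℕ) :
    configOf ((applyAppend (fTau τ))^[t] (pre ω)) = tmRun τ ω t := by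
  rw [tmRun, ← configOf_pre]
  exact (Function.Semiconj.iterate_right (configOf_applyAppend_fTau τ) t) (pre ω)

lemma fTau_iterate_pre (ω : List Bool) (t : ℕ) :
    fTau τ ((applyAppend (fTau τ))^[t] (pre ω)) = toTok (tmEmit τ ω t) := by
  rw [fTau_eq, configOf_iterate_pre]
  rfl

lemma iterate_applyAppend_fTau_pre (ω : List Bool) (T : ℕ) :
    (applyAppend (fTau τ))^[T] (pre ω) =
      pre ω ++ (List.range T).map (fun t => toTok (tmEmit τ ω t)) := by
  induction T with
  | zero => simp
  | succ t ih =>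
    rw [Function.iterate_succ_apply', applyAppend, fTau_iterate_pre, ih,
      List.range_succ, List.map_append, List.map_singleton, List.append_assoc]

end Simulation

theorem fTau_simulates_TM_general (S : ℕ) [NeZero S]
    (τ : Fin S × Option Bool → Fin S × Bool × ℤ)
    (ω : List Bool) (T : ℕ) :
    (applyAppend (fTau τ))^[T] (pre ω) =
      pre ω ++ (List.range T).map (fun t => toTok (tmEmit τ ω t)) ∧
    (1 ≤ T →
      (((applyAppend (fTau τ))^[T] (pre (S := S) ω)).getLastD default).2.1 =
        some (tmEmit τ ω (T - 1)).2.1) := by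
  refine ⟨iterate_applyAppend_fTau_pre τ ω T, fun hT => ?_⟩
  obtain ⟨t, rfl⟩ : ∃ t, T = t + 1 := ⟨T - 1, by omega⟩
  rw [Function.iterate_succ_apply', applyAppend, List.getLastD_concat, fTau_iterate_pre]
  rfl

/-- iterating `f_τ` for `T` steps starting from `Pre(ω)` produces at
step `t` exactly the token `(s_t, a_t, b_t)` of the run of the machine
`⟨S,T,τ⟩` on `ω`; in particular the symbol component of the final token is the
machine's output `g_{⟨S,T,τ⟩}(ω)`. -/
theorem fTau_simulates_TM (S : ℕ) [NeZero S]
    (τ : Fin S × Option Bool → Fin S × Bool × ℤ)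
    (hmv : ∀ p, (τ p).2.2 = -1 ∨ (τ p).2.2 = 0 ∨ (τ p).2.2 = 1)
    (ω : List Bool) (T : ℕ) :
    (applyAppend (fTau τ))^[T] (pre ω) =
      pre ω ++ (List.range T).map (fun t => toTok (tmEmit τ ω t)) ∧
    (1 ≤ T →
      (((applyAppend (fTau τ))^[T] (pre (S := S) ω)).getLastD default).2.1 =
        some (tmEmit τ ω (T - 1)).2.1) :=
  fTau_simulates_TM_general S τ ω T
end
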